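/- arXiv:2008.11018 — 2 statements merged into one kernel-verified Lean document; each statement's English description precedes it below -/
import Mathlib

section
/- For every integer n ≥ 2 and every 1 ≤ k ≤ n−1, the Gårding cone Γ_{k+1} is contained in the Gårding cone Γ_k; that is, the connected component of {λ ∈ ℝⁿ : σ_{k+1}(λ) > 0} containing (1,…,1) is a subset of the connected component of {λ ∈ ℝⁿ : σ_k(λ) > 0} containing (1,…,1). -/
/-- The `k`-th elementary symmetric function of `l = (l 0, …, l (n-1)) ∈ ℝⁿ`. -/
noncomputable def esymm (n k : ℕ) (l : Fin n → ℝ) : ℝ :=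
  ∑ s ∈ Finset.powersetCard k (Finset.univ : Finset (Fin n)), ∏ i ∈ s, l i

/-- The Gårding cone `Γ_k ⊆ ℝⁿ`: the connected component of `{λ : σ_k(λ) > 0}`
containing the vector `(1,…,1)`. -/
noncomputable def gardingCone (n k : ℕ) : Set (Fin n → ℝ) :=
  connectedComponentIn {l : Fin n → ℝ | 0 < esymm n k l} (fun _ => 1)

/-!
If `σ_0, …, σ_{m-1} ≥ 0` and `σ_m > 0` at `λ ∈ ℝᴺ`, then `σ_0, …, σ_m > 0` at `λ`.
Indeed, the derivative of `∏ (x + λ_i)` is again real-rooted (Rolle), of the form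
`N ∏ (x + μ_i)` with `σ_j(μ) = (N - j)/N · σ_j(λ)`, so the sign pattern passes to `μ`
and we may assume `m = N`; then `∏ (x + λ_i) = ∑ σ_j(λ) x^{N-j}` is positive for `x ≥ 0`,
forcing every `λ_i > 0`.

Consequently `{σ_m > 0}` is the disjoint union of the open sets `{σ_0, …, σ_m > 0}` and
`{σ_m > 0} ∩ {σ_j < 0 for some j < m}`. The connected component `Γ_m` of `(1, …, 1)` lies
in the first, hence in `{σ_j > 0}` for every `j ≤ m`, and being connected it lies in `Γ_j`.
-/

open Polynomial

-- Rolle: `f'` has at most one root fewer than `f`.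
theorem Polynomial.Splits.derivative_of_real {f : ℝ[X]} (hf : f.Splits) :
    f.derivative.Splits := by
  rw [splits_iff_card_roots] at hf ⊢
  have := card_roots_le_derivative f
  have := natDegree_derivative_le f
  have := card_roots' f.derivative
  omega

namespace Multiset

theorem esymm_eq_zero_of_card_lt {R : Type*} [CommSemiring R] {s : Multiset R} {j : ℕ}
    (h : card s < j) : s.esymm j = 0 := by
  simp [esymm, powersetCard_eq_empty _ h]

theorem esymm_pos_of_forall_pos {s : Multiset ℝ} (hs : ∀ a ∈ s, 0 < a) {j : ℕ}
    (hj : j ≤ card s) : 0 < s.esymm j := by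
  have hne : s.powersetCard j ≠ 0 := by
    rw [Ne, ← card_eq_zero, card_powersetCard]
    exact (Nat.choose_pos hj).ne'
  rw [esymm]
  simpa using sum_lt_sum_of_nonempty hne (f := fun _ => (0 : ℝ)) fun t ht =>
    prod_pos fun a ha => hs a (mem_of_le (mem_powersetCard.mp ht).1 ha)

theorem forall_pos_of_esymm_nonneg {s : Multiset ℝ} (hnonneg : ∀ j < card s, 0 ≤ s.esymm j)
    (hpos : 0 < s.esymm (card s)) : ∀ a ∈ s, 0 < a := by
  intro a ha
  by_contra! hle
  have hroot : ((s.map (X + C ·)).prod).eval (-a) = 0 := by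
    rw [eval_multiset_prod]
    exact prod_eq_zero (mem_map.mpr ⟨_, mem_map_of_mem _ ha, by simp⟩)
  have heval : 0 < ((s.map (X + C ·)).prod).eval (-a) := by
    rw [prod_X_add_C_eq_sum_esymm, eval_finsetSum]
    refine Finset.sum_pos' (fun j hj => ?_) ⟨card s, by simp, by simpa using hpos⟩
    have hj : j ≤ card s := Finset.mem_range_succ_iff.mp hj
    simp only [eval_mul, eval_C, eval_pow, eval_X]
    refine mul_nonneg ?_ (pow_nonneg (by linarith) _)
    rcases hj.lt_or_eq with hj | rfl
    exacts [hnonneg j hj, hpos.le]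
  exact heval.ne' hroot

theorem exists_derivative_prod_X_add_C (s : Multiset ℝ) :
    ∃ t : Multiset ℝ, card t = card s - 1 ∧
      derivative (s.map (X + C ·)).prod = C (card s : ℝ) * (t.map (X + C ·)).prod := by
  set p := (s.map (X + C ·)).prod
  have hp : p = ((s.map (- ·)).map (X - C ·)).prod := by
    simp [p, map_map, sub_eq_add_neg]
  have hsplit : p.derivative.Splits := by
    refine Splits.derivative_of_real ?_
    rw [hp]
    exact Splits.multisetProd fun f hf => by
      obtain ⟨a, -, rfl⟩ := mem_map.mp hf
      exact Splits.X_sub_C a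
  have hdeg : p.natDegree = card s := by
    rw [hp, natDegree_multiset_prod_X_sub_C_eq_card, card_map]
  have hmonic : p.Monic := by
    rw [hp]
    exact monic_multiset_prod_of_monic _ _ fun a _ => monic_X_sub_C a
  refine ⟨p.derivative.roots.map (- ·), ?_, ?_⟩
  · rw [card_map, ← hsplit.natDegree_eq_card_roots, natDegree_derivative, hdeg]
  · conv_lhs => rw [hsplit.eq_prod_roots]
    rw [leadingCoeff_derivative, hmonic.leadingCoeff, hdeg, one_mul, map_map]
    simp [sub_eq_add_neg]

theorem exists_esymm_eq_mul_esymm (s : Multiset ℝ) :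
    ∃ t : Multiset ℝ, card t = card s - 1 ∧
      ∀ i < card s, t.esymm i = (card s - i) / card s * s.esymm i := by
  obtain ⟨t, hcard, hderiv⟩ := exists_derivative_prod_X_add_C s
  refine ⟨t, hcard, fun i hi => ?_⟩
  have hcoeff := congrArg (coeff · (card s - 1 - i)) hderiv
  simp only [coeff_derivative, coeff_C_mul] at hcoeff
  rw [prod_X_add_C_coeff _ (by omega), prod_X_add_C_coeff _ (by omega),
    show card s - (card s - 1 - i + 1) = i by omega,
    show card t - (card s - 1 - i) = i by omega] at hcoeff
  have hs : (0 : ℝ) < card s := by exact_mod_cast (Nat.zero_le i).trans_lt hi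
  field_simp
  rw [mul_comm, ← hcoeff]
  push_cast [Nat.sub_sub, Nat.cast_sub (show 1 + i ≤ card s by omega)]
  ring

theorem esymm_pos_of_esymm_nonneg {s : Multiset ℝ} {m : ℕ} (hnonneg : ∀ j < m, 0 ≤ s.esymm j)
    (hpos : 0 < s.esymm m) : ∀ j ≤ m, 0 < s.esymm j := by
  have hm : m ≤ card s := by
    by_contra! h
    exact hpos.ne' (esymm_eq_zero_of_card_lt h)
  obtain ⟨d, hd⟩ := Nat.exists_eq_add_of_le hm
  induction d generalizing s with
  | zero =>
    subst hd
    exact fun j hj => esymm_pos_of_forall_pos (forall_pos_of_esymm_nonneg hnonneg hpos) hj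
  | succ d ih =>
    obtain ⟨t, hcard, ht⟩ := exists_esymm_eq_mul_esymm s
    have hfactor : ∀ j ≤ m, 0 < ((card s : ℝ) - j) / card s := fun j hj =>
      div_pos (sub_pos.mpr (by exact_mod_cast (by omega : j < card s)))
        (by exact_mod_cast (by omega : 0 < card s))
    intro j hj
    have := ih (s := t) (fun j' hj' => ?_) ?_ (by omega) (by omega) j hj
    · rwa [ht j (by omega), mul_pos_iff_of_pos_left (hfactor j hj)] at this
    · rw [ht j' (by omega)]
      exact mul_nonneg (hfactor j' hj'.le).le (hnonneg j' hj')
    · rw [ht m (by omega)]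
      exact mul_pos (hfactor m le_rfl) hpos

end Multiset

theorem esymm_eq_multiset_esymm (n k : ℕ) (l : Fin n → ℝ) :
    esymm n k l = (Finset.univ.val.map l).esymm k :=
  (Finset.esymm_map_val l _ k).symm

theorem continuous_esymm (n k : ℕ) : Continuous (esymm n k) :=
  continuous_finsetSum _ fun _ _ => continuous_finsetProd _ fun i _ => continuous_apply i

theorem esymm_pos_of_esymm_nonneg {n m : ℕ} {l : Fin n → ℝ}
    (hnonneg : ∀ j < m, 0 ≤ esymm n j l) (hpos : 0 < esymm n m l) :
    ∀ j ≤ m, 0 < esymm n j l := by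
  simp only [esymm_eq_multiset_esymm] at *
  exact Multiset.esymm_pos_of_esymm_nonneg hnonneg hpos

theorem one_mem_gardingCone {n k : ℕ} {l : Fin n → ℝ} (hl : l ∈ gardingCone n k) :
    (fun _ => 1) ∈ gardingCone n k :=
  mem_connectedComponentIn (connectedComponentIn_nonempty_iff.mp ⟨l, hl⟩)

theorem gardingCone_subset_setOf_forall_esymm_pos (n m : ℕ) :
    gardingCone n m ⊆ {l | ∀ j ≤ m, 0 < esymm n j l} := by
  set G := {l : Fin n → ℝ | ∀ j ≤ m, 0 < esymm n j l}
  set W := ⋃ j < m, {l : Fin n → ℝ | esymm n j l < 0}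
  have hG_open : IsOpen G := by
    simp only [G, Set.ofPred_forall]
    exact (Set.finite_Iic m).isOpen_biInter fun j _ =>
      isOpen_lt continuous_const (continuous_esymm n j)
  have hW_open : IsOpen W :=
    isOpen_iUnion fun j => isOpen_iUnion fun _ =>
      isOpen_lt (continuous_esymm n j) continuous_const
  have hGW : Disjoint G W :=
    Set.disjoint_left.mpr fun l hlG hlW => by
      obtain ⟨j, hj, hneg⟩ := Set.mem_iUnion₂.mp hlW
      exact (hlG j hj.le).not_gt hneg
  have hcover : {l | 0 < esymm n m l} ⊆ G ∪ W := fun l hl => by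
    by_cases h : l ∈ W
    · exact .inr h
    · simp only [W, Set.mem_iUnion₂, Set.mem_ofPred_eq, not_exists, not_lt] at h
      exact .inl (esymm_pos_of_esymm_nonneg h hl)
  have hone_nonneg : ∀ j, 0 ≤ esymm n j (fun _ => 1) := fun j => by
    unfold esymm
    positivity
  intro l hl
  have hone := one_mem_gardingCone hl
  refine isPreconnected_connectedComponentIn.subset_left_of_subset_union hG_open hW_open hGW
    ((connectedComponentIn_subset _ _).trans hcover) ⟨_, hone, ?_⟩ hl
  refine (hcover (connectedComponentIn_subset _ _ hone)).resolve_right fun hone_W => ?_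
  obtain ⟨j, -, hneg⟩ := Set.mem_iUnion₂.mp hone_W
  exact (hone_nonneg j).not_gt hneg

theorem gardingCone_antitone (n : ℕ) : Antitone (gardingCone n) := fun j m hjm _ hl =>
  isPreconnected_connectedComponentIn.subset_connectedComponentIn (one_mem_gardingCone hl)
    (fun _ hl' => gardingCone_subset_setOf_forall_esymm_pos n m hl' j hjm) hl

theorem gardingCone_succ_subset_general (n k : ℕ) :
    gardingCone n (k + 1) ⊆ gardingCone n k :=
  gardingCone_antitone n k.le_succ

/-- For `n ≥ 2` and `1 ≤ k ≤ n - 1`, the Gårding cone `Γ_{k+1}` is contained in `Γ_k`. -/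
theorem gardingCone_succ_subset (n k : ℕ) (hn : 2 ≤ n) (hk1 : 1 ≤ k) (hk : k ≤ n - 1) :
    gardingCone n (k + 1) ⊆ gardingCone n k :=
  gardingCone_succ_subset_general n k
end

section
/- Let n ≥ 1 and 1 ≤ k ≤ n. If λ ∈ Γ_k, then σ_j(λ) > 0 for every 1 ≤ j ≤ k. In particular, σ₁(λ) = λ₁ + ⋯ + λₙ > 0 for every λ ∈ Γ_k. -/
open Polynomial in
lemma esymm_eq_coeff (n j : ℕ) (hj : j ≤ n) (l : Fin n → ℝ) :
    (∏ i : Fin n, (X + C (l i))).coeff (n - j) = esymm n j l := by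
  rw [esymm]
  rw [show (Finset.univ : Finset (Fin n)).powersetCard j
      = (Finset.univ : Finset (Fin n)).powersetCard
        ((Finset.univ : Finset (Fin n)).card - (n - j)) by
    simp [Nat.sub_sub_self hj]]
  rw [← Finset.prod_X_add_C_coeff (Finset.univ : Finset (Fin n)) l (by simp)]

lemma esymm_zero_eq (n : ℕ) (l : Fin n → ℝ) : esymm n 0 l = 1 := by
  simp [esymm]

lemma esymm_continuous (n j : ℕ) : Continuous (esymm n j) := by
  refine continuous_finset_sum _ fun s _ => continuous_finset_prod _ fun i _ => ?_
  exact continuous_apply i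

lemma esymm_one_pos (n j : ℕ) (hj : j ≤ n) : 0 < esymm n j (fun _ => 1) := by
  have : esymm n j (fun _ => 1) = ((Finset.univ : Finset (Fin n)).powersetCard j).card := by
    simp [esymm]
  rw [this]
  have := Nat.choose_pos hj
  have hcard : ((Finset.univ : Finset (Fin n)).powersetCard j).card = n.choose j := by
    simp [Finset.card_powersetCard]
  rw [hcard]
  exact_mod_cast this

open Polynomial in
lemma roots_card_le_iterate (m : ℕ) (p : ℝ[X]) :
    Multiset.card p.roots ≤ Multiset.card ((derivative^[m]) p).roots + m := by
  induction m generalizing p with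
  | zero => simp
  | succ d ih =>
      have h1 := p.card_roots_le_derivative
      have h2 := ih (derivative p)
      rw [Function.iterate_succ_apply]
      omega

lemma nat_descFactorial_pos {a b : ℕ} (h : b ≤ a) : 0 < a.descFactorial b :=
  Nat.pos_of_ne_zero fun h0 => absurd (Nat.descFactorial_eq_zero_iff_lt.mp h0) (not_lt.mpr h)

lemma multiset_sum_pos {s : Multiset ℝ} (h : ∀ x ∈ s, 0 < x) (hs : s ≠ 0) : 0 < s.sum := by
  induction s using Multiset.induction with
  | empty => simp at hs
  | cons a t ih =>
    rw [Multiset.sum_cons]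
    rcases eq_or_ne t 0 with rfl | ht
    · simpa using h a (by simp)
    · have h1 := ih (fun x hx => h x (Multiset.mem_cons_of_mem hx)) ht
      have ha := h a (Multiset.mem_cons_self a t)
      linarith

lemma multiset_esymm_pos {s : Multiset ℝ} (hs : ∀ x ∈ s, 0 < x) (j : ℕ)
    (hj : j ≤ Multiset.card s) : 0 < s.esymm j := by
  rw [Multiset.esymm]
  have hne : (s.powersetCard j).map Multiset.prod ≠ 0 := by
    intro h
    have := Multiset.card_powersetCard j s
    rw [Multiset.map_eq_zero.mp h] at this
    simp only [Multiset.card_zero] at this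
    exact (Nat.choose_pos hj).ne' this.symm
  refine multiset_sum_pos ?_ hne
  intro x hx
  obtain ⟨t, ht, rfl⟩ := Multiset.mem_map.mp hx
  rw [Multiset.mem_powersetCard] at ht
  exact Multiset.prod_pos fun a ha => hs a (Multiset.mem_of_le ht.1 ha)

open Polynomial in
/-- Key algebraic lemma: if `σ_j(λ) ≥ 0` for `1 ≤ j ≤ k` and `σ_k(λ) > 0`, then in fact
`σ_j(λ) > 0` for all `1 ≤ j ≤ k`. -/
lemma esymm_pos_of_nonneg (n k : ℕ) (hk1 : 1 ≤ k) (hk : k ≤ n) (l : Fin n → ℝ)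
    (h0 : ∀ j, 1 ≤ j → j ≤ k → 0 ≤ esymm n j l) (hpos : 0 < esymm n k l) :
    ∀ j, 1 ≤ j → j ≤ k → 0 < esymm n j l := by
  set P : ℝ[X] := ∏ i : Fin n, (X + C (l i)) with hPdef
  -- basic facts about P
  have hPmonic : P.Monic := monic_prod_of_monic _ _ fun i _ => monic_X_add_C (l i)
  have hPform : P = (((Finset.univ : Finset (Fin n)).val.map fun i => -l i).map
      fun a => X - C a).prod := by
    rw [hPdef, Finset.prod, Multiset.map_map]
    congr 1
    apply Multiset.map_congr rfl
    intro i _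
    simp [sub_neg_eq_add]
  have hProots : P.roots = ((Finset.univ : Finset (Fin n)).val.map fun i => -l i) := by
    rw [hPform, roots_multiset_prod_X_sub_C]
  have hProotsCard : Multiset.card P.roots = n := by
    rw [hProots]; simp
  have hPdeg : P.natDegree = n := by
    rw [hPform, natDegree_multiset_prod_X_sub_C_eq_card]; simp
  -- the iterated derivative Q
  set Q : ℝ[X] := (derivative^[n - k]) P with hQdef
  have hQcoeff : ∀ m : ℕ, Q.coeff m
      = ((m + (n - k)).descFactorial (n - k) : ℝ) * P.coeff (m + (n - k)) := by
    intro m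
    rw [hQdef, Polynomial.coeff_iterate_derivative, nsmul_eq_mul]
  have hPcoeff : ∀ m : ℕ, m ≤ k → P.coeff (m + (n - k)) = esymm n (k - m) l := by
    intro m hm
    have h1 : m + (n - k) = n - (k - m) := by omega
    rw [h1, esymm_eq_coeff n (k - m) (by omega)]
  -- coefficients of Q are nonnegative
  have hQc0 : 0 < Q.coeff 0 := by
    rw [hQcoeff 0, hPcoeff 0 (by omega)]
    simp only [Nat.sub_zero, zero_add]
    apply mul_pos _ hpos
    exact_mod_cast nat_descFactorial_pos le_rfl
  have hQck : Q.coeff k = (n.descFactorial (n - k) : ℝ) := by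
    rw [hQcoeff k]
    have : k + (n - k) = n := by omega
    rw [this, show P.coeff n = 1 by
      rw [← hPdeg]; exact hPmonic.coeff_natDegree]
    ring
  have hQnonneg : ∀ m : ℕ, 0 ≤ Q.coeff m := by
    intro m
    rcases le_or_gt m k with hm | hm
    · rw [hQcoeff m, hPcoeff m hm]
      apply mul_nonneg (by positivity)
      rcases Nat.eq_or_lt_of_le hm with rfl | hmk
      · simp [esymm_zero_eq]
      · exact h0 (k - m) (by omega) (by omega)
    · rw [hQcoeff m]
      have : P.coeff (m + (n - k)) = 0 := by
        apply coeff_eq_zero_of_natDegree_lt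
        rw [hPdeg]; omega
      rw [this, mul_zero]
  -- degree of Q
  have hQdegle : Q.natDegree ≤ k := by
    have h1 := Polynomial.natDegree_iterate_derivative P (n - k)
    rw [hPdeg, ← hQdef] at h1
    omega
  have hQckne : Q.coeff k ≠ 0 := by
    rw [hQck]
    exact_mod_cast (nat_descFactorial_pos (by omega)).ne'
  have hQdeg : Q.natDegree = k :=
    le_antisymm hQdegle (le_natDegree_of_ne_zero hQckne)
  -- Q has k real roots
  have hQrootsCard : Multiset.card Q.roots = k := by
    have h1 := roots_card_le_iterate (n - k) P
    rw [hProotsCard, ← hQdef] at h1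
    have h2 := Q.card_roots'
    omega
  -- every root of Q is negative
  have hQevalpos : ∀ t : ℝ, 0 ≤ t → 0 < Q.eval t := by
    intro t ht
    rw [Polynomial.eval_eq_sum_range]
    have h0mem : (0 : ℕ) ∈ Finset.range (Q.natDegree + 1) := by
      simp
    calc (0 : ℝ) < Q.coeff 0 * t ^ 0 := by simpa using hQc0
    _ ≤ ∑ m ∈ Finset.range (Q.natDegree + 1), Q.coeff m * t ^ m := by
        apply Finset.single_le_sum (f := fun m => Q.coeff m * t ^ m) _ h0mem
        intro i _
        exact mul_nonneg (hQnonneg i) (pow_nonneg ht i)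
  have hQrootsNeg : ∀ r ∈ Q.roots, 0 < -r := by
    intro r hr
    have hQne : Q ≠ 0 := fun h => by simp [h] at hQckne
    have hroot : Q.eval r = 0 := (Polynomial.mem_roots hQne).mp hr
    by_contra h
    push_neg at h
    have hpos' := hQevalpos r (by linarith)
    rw [hroot] at hpos'
    exact lt_irrefl 0 hpos'
  -- factor Q over its roots
  have hQfactor : C Q.leadingCoeff * (Q.roots.map fun a => X - C a).prod = Q :=
    Polynomial.C_leadingCoeff_mul_prod_multiset_X_sub_C (by rw [hQrootsCard, hQdeg])
  set s : Multiset ℝ := Q.roots.map fun r => -r with hsdef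
  have hsCard : Multiset.card s = k := by rw [hsdef, Multiset.card_map, hQrootsCard]
  have hspos : ∀ x ∈ s, 0 < x := by
    intro x hx
    obtain ⟨r, hr, rfl⟩ := Multiset.mem_map.mp hx
    exact hQrootsNeg r hr
  have hsprod : (Q.roots.map fun a => X - C a).prod = (s.map fun a => X + C a).prod := by
    rw [hsdef, Multiset.map_map]
    congr 1
    apply Multiset.map_congr rfl
    intro r _
    simp [sub_eq_add_neg]
  have hlc : Q.leadingCoeff = (n.descFactorial (n - k) : ℝ) := by
    rw [Polynomial.leadingCoeff, hQdeg, hQck]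
  -- conclude
  intro j hj1 hjk
  have hQcoeffkj : Q.coeff (k - j) = Q.leadingCoeff * s.esymm j := by
    conv_lhs => rw [← hQfactor]
    rw [hsprod, Polynomial.coeff_C_mul, Multiset.prod_X_add_C_coeff s (by omega : k - j ≤ Multiset.card s)]
    rw [hsCard, Nat.sub_sub_self hjk]
  have hesympos : 0 < s.esymm j := multiset_esymm_pos hspos j (by omega)
  have hlc_pos : (0 : ℝ) < Q.leadingCoeff := by
    rw [hlc]
    exact_mod_cast nat_descFactorial_pos (by omega)
  have hQkjpos : 0 < Q.coeff (k - j) := by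
    rw [hQcoeffkj]; exact mul_pos hlc_pos hesympos
  have := hQcoeff (k - j)
  rw [hPcoeff (k - j) (by omega), Nat.sub_sub_self hjk] at this
  rw [this] at hQkjpos
  have hdpos : (0 : ℝ) < (((k - j) + (n - k)).descFactorial (n - k) : ℝ) := by
    exact_mod_cast nat_descFactorial_pos (by omega)
  nlinarith [hQkjpos, hdpos]

open Finset in
lemma esymm_one_eq_sum (n : ℕ) (l : Fin n → ℝ) : esymm n 1 l = ∑ i, l i := by
  rw [esymm, Finset.powersetCard_one]
  rw [Finset.sum_map]
  apply Finset.sum_congr rfl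
  intro i _
  simp

/-- If `λ ∈ Γ_k` then `σ_j(λ) > 0` for every `1 ≤ j ≤ k`; in particular
`σ₁(λ) = λ₁ + ⋯ + λₙ > 0`. -/
theorem esymm_pos_of_mem_gardingCone (n k : ℕ) (hn : 1 ≤ n) (hk1 : 1 ≤ k) (hk : k ≤ n)
    (l : Fin n → ℝ) (hl : l ∈ gardingCone n k) :
    (∀ j, 1 ≤ j → j ≤ k → 0 < esymm n j l) ∧ 0 < ∑ i, l i := by
  set S : Set (Fin n → ℝ) := {l | 0 < esymm n k l} with hSdef
  set A : Set (Fin n → ℝ) := {l | ∀ j, 1 ≤ j → j ≤ k → 0 < esymm n j l} with hAdef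
  have hAeq : A = ⋂ j ∈ Finset.Icc 1 k, {l : Fin n → ℝ | 0 < esymm n j l} := by
    ext x
    simp only [hAdef, Set.mem_setOf_eq, Set.mem_iInter, Finset.mem_Icc]
    constructor
    · rintro h j ⟨h1, h2⟩; exact h j h1 h2
    · intro h j h1 h2; exact h j ⟨h1, h2⟩
  have hAopen : IsOpen A := by
    rw [hAeq]
    apply isOpen_biInter_finset
    intro j _
    exact isOpen_lt continuous_const (esymm_continuous n j)
  have hone : (fun _ => (1 : ℝ)) ∈ S := esymm_one_pos n k hk
  have hC : IsPreconnected (gardingCone n k) := isPreconnected_connectedComponentIn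
  have hCS : gardingCone n k ⊆ S := connectedComponentIn_subset _ _
  have honeC : (fun _ => (1 : ℝ)) ∈ gardingCone n k := mem_connectedComponentIn hone
  have honeA : (fun _ => (1 : ℝ)) ∈ A := fun j h1 h2 => esymm_one_pos n j (h2.trans hk)
  have hclosure : closure A ∩ gardingCone n k ⊆ A := by
    rintro x ⟨hxcl, hxC⟩
    have hnn : ∀ j, 1 ≤ j → j ≤ k → 0 ≤ esymm n j x := by
      intro j h1 h2
      have hsub : A ⊆ {l : Fin n → ℝ | 0 ≤ esymm n j l} := fun y hy => (hy j h1 h2).le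
      have hcl : IsClosed {l : Fin n → ℝ | 0 ≤ esymm n j l} :=
        isClosed_le continuous_const (esymm_continuous n j)
      exact (closure_minimal hsub hcl) hxcl
    exact esymm_pos_of_nonneg n k hk1 hk x hnn (hCS hxC)
  have hCA : gardingCone n k ⊆ A :=
    hC.subset_of_closure_inter_subset hAopen ⟨_, honeC, honeA⟩ hclosure
  have hlA : l ∈ A := hCA hl
  refine ⟨hlA, ?_⟩
  rw [← esymm_one_eq_sum]
  exact hlA 1 le_rfl hk1
end
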